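/- arXiv:2009.01071 — 8 statements merged into one kernel-verified Lean document; each statement's English description precedes it below -/
import Mathlib

section
/- Let σ be a partial action of a locally compact Hausdorff group G on a locally compact Hausdorff space X. If the map F_σ : Γ_σ → X × X, (t,x) ↦ (σ_t(x), x), is proper (preimages of compact sets are compact), then for every pair of compact sets L, M ⊆ X the set ((L,M)) := { t ∈ G : σ_t(L ∩ X_{t⁻¹}) ∩ M ≠ ∅ } is compact. -/
/-- A set-theoretic partial action of a group `H` on a set (type) `Y`:
domains `dom t ⊆ Y` and maps `act t : dom t⁻¹ → dom t` (encoded as total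
functions whose axioms are only required on the domains), satisfying
`Y_e = Y`, `σ_e = id`, `σ_t⁻¹ = σ_{t⁻¹}` and `σ_t ∘ σ_s ⊆ σ_{ts}`. -/
structure PartialAction (H : Type*) [Group H] (Y : Type*) where
  dom : H → Set Y
  act : H → Y → Y
  dom_one : dom 1 = Set.univ
  act_one : ∀ y, act 1 y = y
  mapsTo : ∀ t y, y ∈ dom t⁻¹ → act t y ∈ dom t
  act_inv : ∀ t y, y ∈ dom t⁻¹ → act t⁻¹ (act t y) = y
  mem_dom_mul : ∀ s t y, y ∈ dom s⁻¹ → act s y ∈ dom t⁻¹ → y ∈ dom (t * s)⁻¹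
  act_mul : ∀ s t y, y ∈ dom s⁻¹ → act s y ∈ dom t⁻¹ → act t (act s y) = act (t * s) y

/-- The orbit `[U] = ⋃_{t ∈ H} σ_t (U ∩ Y_{t⁻¹})` of a subset `U ⊆ Y`. -/
def PartialAction.orbit {H Y : Type*} [Group H] (σ : PartialAction H Y) (U : Set Y) : Set Y :=
  ⋃ t : H, σ.act t '' (U ∩ σ.dom t⁻¹)

theorem PartialAction.setOf_image_inter_nonempty_eq_image_fst {H Y : Type*} [Group H]
    (σ : PartialAction H Y) (L M : Set Y) :
    {t : H | ((σ.act t '' (L ∩ σ.dom t⁻¹)) ∩ M).Nonempty}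
      = Prod.fst '' {p : H × Y | p.2 ∈ σ.dom p.1⁻¹ ∧ (σ.act p.1 p.2, p.2) ∈ M ×ˢ L} := by
  ext t
  constructor
  · rintro ⟨_, ⟨x, ⟨hxL, hxdom⟩, rfl⟩, hM⟩
    exact ⟨(t, x), ⟨hxdom, hM, hxL⟩, rfl⟩
  · rintro ⟨⟨t, x⟩, ⟨hxdom, hM, hxL⟩, rfl⟩
    exact ⟨σ.act t x, ⟨x, ⟨hxL, hxdom⟩, rfl⟩, hM⟩

theorem compact_LM_of_proper_general {G X : Type*}
    [TopologicalSpace G] [Group G]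
    [TopologicalSpace X]
    (σ : PartialAction G X)
    (hproper : ∀ K : Set (X × X), IsCompact K →
      IsCompact {p : G × X | p.2 ∈ σ.dom p.1⁻¹ ∧ (σ.act p.1 p.2, p.2) ∈ K}) :
    ∀ L M : Set X, IsCompact L → IsCompact M →
      IsCompact {t : G | ((σ.act t '' (L ∩ σ.dom t⁻¹)) ∩ M).Nonempty} := by
  intro L M hL hM
  rw [σ.setOf_image_inter_nonempty_eq_image_fst L M]
  exact (hproper (M ×ˢ L) (hM.prod hL)).image continuous_fst

/-- If `F_σ : Γ_σ → X × X`, `(t,x) ↦ (σ_t x, x)` is proper (preimages of compact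
sets are compact), then for every pair of compact sets `L, M ⊆ X` the set
`((L,M)) = {t : σ_t(L ∩ X_{t⁻¹}) ∩ M ≠ ∅}` is compact. -/
theorem compact_LM_of_proper {G X : Type*}
    [TopologicalSpace G] [Group G] [IsTopologicalGroup G] [LocallyCompactSpace G] [T2Space G]
    [TopologicalSpace X] [LocallyCompactSpace X] [T2Space X]
    (σ : PartialAction G X)
    (hdom : ∀ t, IsOpen (σ.dom t))
    (hcont : ContinuousOn (fun p : G × X => σ.act p.1 p.2) {p : G × X | p.2 ∈ σ.dom p.1⁻¹})
    (hproper : ∀ K : Set (X × X), IsCompact K →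
      IsCompact {p : G × X | p.2 ∈ σ.dom p.1⁻¹ ∧ (σ.act p.1 p.2, p.2) ∈ K}) :
    ∀ L M : Set X, IsCompact L → IsCompact M →
      IsCompact {t : G | ((σ.act t '' (L ∩ σ.dom t⁻¹)) ∩ M).Nonempty} :=
  compact_LM_of_proper_general σ hproper
end

section
/- Let σ be a partial action of a locally compact Hausdorff group G on a locally compact Hausdorff space X such that for all compact L, M ⊆ X the set ((L,M)) := { t ∈ G : σ_t(L ∩ X_{t⁻¹}) ∩ M ≠ ∅ } is compact. Then ((L,M)) has compact closure for all compact L, M (trivially), but there exists an example showing the converse fails: the partial action of ℝ on ℝ²∖{0} given by the flow of the constant horizontal vector field satisfies the compact-closure condition yet ((L,M)) = (2,3] is not compact for L = [(-2,1),(-1,0)] and M = [(1,1),(1,0)]. -/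
/-- The punctured plane `ℝ² ∖ {0}`, carrier of the flow example. -/
def flowDom (t : ℝ) : Set (ℝ × ℝ) :=
  {p : ℝ × ℝ | p ≠ (0, 0) ∧ ∀ s ∈ Set.Icc (0 : ℝ) 1, p ≠ (s * t, 0)}

/-- The flow `φ_t(x,y) = (x+t,y)`. -/
def flowAct (t : ℝ) (p : ℝ × ℝ) : ℝ × ℝ := (p.1 + t, p.2)

/-- The closed segment `L` from `(-2,1)` to `(-1,0)`. -/
noncomputable def Lseg : Set (ℝ × ℝ) := segment ℝ ((-2 : ℝ), (1 : ℝ)) ((-1 : ℝ), (0 : ℝ))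

/-- The closed segment `M` from `(1,1)` to `(1,0)`. -/
noncomputable def Mseg : Set (ℝ × ℝ) := segment ℝ ((1 : ℝ), (1 : ℝ)) ((1 : ℝ), (0 : ℝ))

/-- The set `((L,M)) = {t : φ_t(L ∩ X_{-t}) ∩ M ≠ ∅}` for the flow example. -/
noncomputable def flowLM : Set ℝ :=
  {t : ℝ | ((flowAct t '' (Lseg ∩ flowDom (-t))) ∩ Mseg).Nonempty}

/-! In the flow example a point of `L` at height `y ∈ [0,1]` reaches `M` exactly at time
`t = 2 + y`; the time `t = 2` is lost because the base point `(-1,0)` of `L` lies on the slit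
`[-t,0] × {0}` removed from the domain of `φ_t`. -/

open Set

lemma mem_segment_to_xAxis_iff {a b : ℝ} {p : ℝ × ℝ} :
    p ∈ segment ℝ (a, 1) (b, 0) ↔ ∃ y ∈ Icc (0 : ℝ) 1, p = (b + y * (a - b), y) := by
  rw [segment_symm, segment_eq_image']
  simp [eq_comm]

lemma mem_Lseg_iff {p : ℝ × ℝ} : p ∈ Lseg ↔ ∃ y ∈ Icc (0 : ℝ) 1, p = (-1 - y, y) := by
  rw [Lseg, mem_segment_to_xAxis_iff]
  ring_nf

lemma mem_Mseg_iff {p : ℝ × ℝ} : p ∈ Mseg ↔ ∃ y ∈ Icc (0 : ℝ) 1, p = (1, y) := by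
  rw [Mseg, mem_segment_to_xAxis_iff]
  ring_nf

lemma mem_flowDom_of_snd_ne_zero {t : ℝ} {p : ℝ × ℝ} (hp : p.2 ≠ 0) : p ∈ flowDom t :=
  ⟨fun h => hp (by simp [h]), fun _ _ h => hp (by simp [h])⟩

lemma mk_mul_notMem_flowDom {t s : ℝ} (hs : s ∈ Icc (0 : ℝ) 1) :
    (s * t, (0 : ℝ)) ∉ flowDom t :=
  fun h => h.2 s hs rfl

lemma flowLM_eq : flowLM = Ioc 2 3 := by
  ext t
  simp only [flowLM, mem_ofPred_eq, mem_Ioc]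
  constructor
  · rintro ⟨_, ⟨p, ⟨hpL, hpD⟩, rfl⟩, hM⟩
    obtain ⟨y, ⟨hy0, hy1⟩, rfl⟩ := mem_Lseg_iff.1 hpL
    obtain ⟨y', -, hq⟩ := mem_Mseg_iff.1 hM
    simp only [flowAct, Prod.mk.injEq] at hq
    have ht : t = 2 + y := by linarith [hq.1]
    refine ⟨?_, by linarith⟩
    rcases hy0.lt_or_eq with hy | rfl
    · linarith
    · refine absurd hpD ?_
      convert mk_mul_notMem_flowDom (t := -t) (s := 1 / 2) ⟨by norm_num, by norm_num⟩
        using 2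
      rw [ht]
      norm_num
  · rintro ⟨h2, h3⟩
    have hy : t - 2 ∈ Icc (0 : ℝ) 1 := ⟨by linarith, by linarith⟩
    refine ⟨(1, t - 2), ⟨(-1 - (t - 2), t - 2), ⟨mem_Lseg_iff.2 ⟨_, hy, rfl⟩, ?_⟩, ?_⟩,
      mem_Mseg_iff.2 ⟨_, hy, rfl⟩⟩
    · exact mem_flowDom_of_snd_ne_zero (show t - 2 ≠ 0 by linarith)
    · simp only [flowAct]
      ring_nf

lemma not_isCompact_Ioc_of_lt {α : Type*} [LinearOrder α] [TopologicalSpace α] [OrderTopology α]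
    [DenselyOrdered α] {a b : α} (hab : a < b) : ¬ IsCompact (Ioc a b) := fun hc => by
  have ha : a ∈ closure (Ioc a b) := by
    rw [closure_Ioc hab.ne]
    exact left_mem_Icc.2 hab.le
  rw [hc.isClosed.closure_eq] at ha
  exact lt_irrefl a ha.1

theorem closure_compact_and_flow_counterexample_general {G X : Type*}
    [TopologicalSpace G] [Group G] [T2Space G]
    [TopologicalSpace X]
    (σ : PartialAction G X)
    (h : ∀ L M : Set X, IsCompact L → IsCompact M →
      IsCompact {t : G | ((σ.act t '' (L ∩ σ.dom t⁻¹)) ∩ M).Nonempty}) :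
    (∀ L M : Set X, IsCompact L → IsCompact M →
      IsCompact (closure {t : G | ((σ.act t '' (L ∩ σ.dom t⁻¹)) ∩ M).Nonempty})) ∧
    flowLM = Set.Ioc 2 3 ∧ ¬ IsCompact (Set.Ioc (2 : ℝ) 3) :=
  ⟨fun L M hL hM => (h L M hL hM).closure, flowLM_eq, not_isCompact_Ioc_of_lt (by norm_num)⟩

/-- If `((L,M))` is compact for all compact `L, M`, then trivially `((L,M))` has
compact closure; the converse fails: in the flow partial action of `ℝ` on
`ℝ² ∖ {0}` one has `((L,M)) = (2,3]`, which is not compact, for the segments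
`L = [(-2,1),(-1,0)]` and `M = [(1,1),(1,0)]`. -/
theorem closure_compact_and_flow_counterexample {G X : Type*}
    [TopologicalSpace G] [Group G] [IsTopologicalGroup G] [LocallyCompactSpace G] [T2Space G]
    [TopologicalSpace X] [LocallyCompactSpace X] [T2Space X]
    (σ : PartialAction G X)
    (hdom : ∀ t, IsOpen (σ.dom t))
    (hcont : ContinuousOn (fun p : G × X => σ.act p.1 p.2) {p : G × X | p.2 ∈ σ.dom p.1⁻¹})
    (h : ∀ L M : Set X, IsCompact L → IsCompact M →
      IsCompact {t : G | ((σ.act t '' (L ∩ σ.dom t⁻¹)) ∩ M).Nonempty}) :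
    (∀ L M : Set X, IsCompact L → IsCompact M →
      IsCompact (closure {t : G | ((σ.act t '' (L ∩ σ.dom t⁻¹)) ∩ M).Nonempty})) ∧
    flowLM = Set.Ioc 2 3 ∧ ¬ IsCompact (Set.Ioc (2 : ℝ) 3) :=
  closure_compact_and_flow_counterexample_general σ h
end

section
/- Let τ be a topological partial action of H on Y with enveloping action τ^e on Y^e. The map h : Y/τ → Y^e/τ^e, [y]_τ ↦ [y]_{τ^e}, is well defined and is a homeomorphism between the orbit spaces (with quotient topologies). -/
/-- The orbit equivalence relation of the partial action `τ` obtained by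
restricting a global action of `H` on `Y^e` to a subset `Y`: two points of `Y`
are equivalent iff one is carried to the other by the (partial) action. -/
def tauSetoid (H : Type*) [Group H] {Ye : Type*} [MulAction H Ye] (Y : Set Ye) : Setoid Y where
  r y z := ∃ t : H, t • (y : Ye) = (z : Ye)
  iseqv := ⟨fun y => ⟨1, one_smul H (y : Ye)⟩,
    fun {y z} h => by
      obtain ⟨t, ht⟩ := h
      exact ⟨t⁻¹, by rw [← ht, inv_smul_smul]⟩,
    fun {x y z} h h' => by
      obtain ⟨t, ht⟩ := h
      obtain ⟨t', ht'⟩ := h'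
      exact ⟨t' * t, by rw [mul_smul, ht, ht']⟩⟩

/-! The orbit space of `Y^e` is a quotient of `Y` by the map `y ↦ [y]`: it is onto because the
translates of `Y` cover `Y^e`, and open because `Y` is open and the orbit map of a group action is
open. Its fibres are the `τ`-orbits, so the induced map `Y/τ → Y^e/τ^e` is a homeomorphism. -/

section

open MulAction

variable {G X : Type*} [Group G] [MulAction G X]

theorem tauSetoid_eq_ker_quotientMk_comp_val (Y : Set X) :
    tauSetoid G Y = Setoid.ker fun y : Y => Quotient.mk (orbitRel G X) (y : X) := by
  ext y z
  rw [Setoid.ker_def, Quotient.eq, orbitRel_apply, mem_orbit_iff]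
  exact ⟨fun ⟨t, ht⟩ => ⟨t⁻¹, by rw [← ht, inv_smul_smul]⟩,
    fun ⟨t, ht⟩ => ⟨t⁻¹, by rw [← ht, inv_smul_smul]⟩⟩

theorem MulAction.isOpenQuotientMap_quotientMk_comp_val [TopologicalSpace X]
    [ContinuousConstSMul G X] {Y : Set X} (hY : IsOpen Y)
    (hcover : ∀ z : X, ∃ t : G, ∃ y ∈ Y, t • y = z) :
    IsOpenQuotientMap fun y : Y => Quotient.mk (orbitRel G X) (y : X) where
  surjective := by
    rintro ⟨z⟩
    obtain ⟨t, y, hy, rfl⟩ := hcover z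
    exact ⟨⟨y, hy⟩, Quotient.sound (mem_orbit_iff.2 ⟨t⁻¹, inv_smul_smul t y⟩)⟩
  continuous := continuous_quot_mk.comp continuous_subtype_val
  isOpenMap := isOpenQuotientMap_quotientMk.isOpenMap.comp hY.isOpenMap_subtype_val

end

/-- Let `τ^e` be a global continuous action of `H` on `Y^e` and `Y ⊆ Y^e` open
with `Y^e = ⋃_t τ^e_t(Y)` (so `τ^e` is the enveloping action of the restricted
partial action `τ` on `Y`).  Then `[y]_τ ↦ [y]_{τ^e}` is a well-defined
homeomorphism of the orbit spaces `Y/τ ≃ₜ Y^e/τ^e` (quotient topologies). -/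
theorem orbitSpace_homeomorph_envOrbitSpace {H Ye : Type*} [Group H] [TopologicalSpace Ye]
    [MulAction H Ye] (Y : Set Ye) (hY : IsOpen Y)
    (hc : ∀ t : H, Continuous fun y : Ye => t • y)
    (hcover : ∀ z : Ye, ∃ t : H, ∃ y ∈ Y, t • y = z) :
    ∃ h : Quotient (tauSetoid H Y) ≃ₜ Quotient (MulAction.orbitRel H Ye),
      ∀ y : Y, h (Quotient.mk (tauSetoid H Y) y)
        = Quotient.mk (MulAction.orbitRel H Ye) (y : Ye) := by
  have : ContinuousConstSMul H Ye := ⟨hc⟩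
  have hπ := (MulAction.isOpenQuotientMap_quotientMk_comp_val hY hcover).isQuotientMap
  rw [tauSetoid_eq_ker_quotientMk_comp_val]
  exact ⟨hπ.homeomorph (f := ⟨_, hπ.continuous⟩), fun _ => rfl⟩
end

section
/- Let σ be a LCH partial action of G on X with enveloping action σ^e on X^e. If σ^e is a proper action on a locally compact Hausdorff space X^e, then every net {(t_i, x_i)} in Γ_σ for which {(σ_{t_i}(x_i), x_i)} converges in X × X has a subnet converging to a point of Γ_σ. -/
open Filter

theorem IsProperMap.exists_mapClusterPt_of_tendsto {X Y ι : Type*} [TopologicalSpace X]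
    [TopologicalSpace Y] {π : X → Y} (hπ : IsProperMap π) {l : Filter ι} [l.NeBot]
    {u : ι → X} {y : Y} (hu : Tendsto (π ∘ u) l (nhds y)) :
    ∃ x, π x = y ∧ MapClusterPt x l u := by
  have hy : MapClusterPt y (map u l) π := by
    rw [MapClusterPt, map_map]
    exact ClusterPt.of_le_nhds hu
  exact hπ.clusterPt_of_mapClusterPt hy

theorem exists_clusterPt_of_proper_env_general {G Xe : Type*}
    [TopologicalSpace G] [Group G]
    [TopologicalSpace Xe]
    [MulAction G Xe]
    (X : Set Xe)
    (hproper : IsProperMap (fun p : G × Xe => (p.1 • p.2, p.2)))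
    {ι : Type*} (l : Filter ι) [l.NeBot] (f : ι → G × Xe)
    (p : Xe × Xe) (hp1 : p.1 ∈ X) (hp2 : p.2 ∈ X)
    (hconv : Tendsto (fun i => ((f i).1 • (f i).2, (f i).2)) l (nhds p)) :
    ∃ q : G × Xe, (q.2 ∈ X ∧ q.1 • q.2 ∈ X) ∧ MapClusterPt q l f := by
  obtain ⟨q, hq, hcluster⟩ := hproper.exists_mapClusterPt_of_tendsto hconv
  subst hq
  exact ⟨q, ⟨hp2, hp1⟩, hcluster⟩

/-- Let `σ^e` be a proper continuous global action of a LCH group `G` on a LCH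
space `X^e`, and let `σ` be the partial action obtained by restricting it to an
open subset `X` with `X^e = ⋃_t σ^e_t(X)` (so `σ^e` is the enveloping action of
`σ`).  Then every net `(t_i, x_i)` in `Γ_σ` for which `(σ_{t_i}(x_i), x_i)`
converges to a point of `X × X` has a subnet (cluster point) converging to a
point of `Γ_σ`. -/
theorem exists_clusterPt_of_proper_env {G Xe : Type*}
    [TopologicalSpace G] [Group G] [IsTopologicalGroup G] [LocallyCompactSpace G] [T2Space G]
    [TopologicalSpace Xe] [T2Space Xe] [LocallyCompactSpace Xe]
    [MulAction G Xe] [ContinuousSMul G Xe]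
    (X : Set Xe) (hX : IsOpen X)
    (hcover : ∀ z : Xe, ∃ t : G, ∃ x ∈ X, t • x = z)
    (hproper : IsProperMap (fun p : G × Xe => (p.1 • p.2, p.2)))
    {ι : Type*} (l : Filter ι) [l.NeBot] (f : ι → G × Xe)
    (hf : ∀ i, (f i).2 ∈ X ∧ (f i).1 • (f i).2 ∈ X)
    (p : Xe × Xe) (hp1 : p.1 ∈ X) (hp2 : p.2 ∈ X)
    (hconv : Tendsto (fun i => ((f i).1 • (f i).2, (f i).2)) l (nhds p)) :
    ∃ q : G × Xe, (q.2 ∈ X ∧ q.1 • q.2 ∈ X) ∧ MapClusterPt q l f :=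
  exists_clusterPt_of_proper_env_general X hproper l f p hp1 hp2 hconv
end

section
/- Let σ be a LCH partial action of G on X such that F_σ : Γ_σ → X × X is proper. Then the graph Gr(σ) = { (t,x,y) ∈ G × X × X : x ∈ X_{t⁻¹}, y = σ_t(x) } is closed in G × X × X. -/
/-! Properness of `F_σ` into the locally compact Hausdorff space `X × X` makes its graph
`a ↦ (a, F_σ a)` a proper map on `Γ_σ`, so the graph of `F_σ` is closed in `(G × X) × (X × X)`.
`Gr(σ)` is the preimage of that graph under `(t, x, y) ↦ ((t, x), (y, x))`. -/

section ProperGraph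

variable {α β : Type*} [TopologicalSpace α] [TopologicalSpace β] {s : Set α} {f : α → β}

theorem isProperMap_domRestrict_of_isCompact_preimage [T2Space β] [LocallyCompactSpace β]
    (hf : ContinuousOn f s) (hK : ∀ K, IsCompact K → IsCompact {a | a ∈ s ∧ f a ∈ K}) :
    IsProperMap (s.domRestrict f) := by
  refine isProperMap_iff_isCompact_preimage.2 ⟨hf.domRestrict, fun K hKc => ?_⟩
  rw [Subtype.isCompact_iff]
  convert hK K hKc using 1
  ext a
  simp [Set.domRestrict, and_comm]

theorem isClosed_graph_of_isCompact_preimage [T2Space α] [T2Space β] [LocallyCompactSpace β]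
    (hf : ContinuousOn f s) (hK : ∀ K, IsCompact K → IsCompact {a | a ∈ s ∧ f a ∈ K}) :
    IsClosed {p : α × β | p.1 ∈ s ∧ f p.1 = p.2} := by
  let graph : s → α × β := fun a => (a, f a)
  have hgraph : IsProperMap graph :=
    isProperMap_of_comp_of_t2 (continuous_subtype_val.prodMk hf.domRestrict) continuous_snd
      (isProperMap_domRestrict_of_isCompact_preimage hf hK)
  convert hgraph.isClosed_range using 1
  ext ⟨a, b⟩
  simp [graph, eq_comm]

end ProperGraph

theorem graph_closed_of_proper_general {G X : Type*}
    [TopologicalSpace G] [Group G] [T2Space G]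
    [TopologicalSpace X] [LocallyCompactSpace X] [T2Space X]
    (σ : PartialAction G X)
    (hcont : ContinuousOn (fun p : G × X => σ.act p.1 p.2) {p : G × X | p.2 ∈ σ.dom p.1⁻¹})
    (hproper : ∀ K : Set (X × X), IsCompact K →
      IsCompact {p : G × X | p.2 ∈ σ.dom p.1⁻¹ ∧ (σ.act p.1 p.2, p.2) ∈ K}) :
    IsClosed {q : G × X × X | q.2.1 ∈ σ.dom q.1⁻¹ ∧ σ.act q.1 q.2.1 = q.2.2} := by
  have hF : IsClosed {p : (G × X) × (X × X) |
      p.1.2 ∈ σ.dom p.1.1⁻¹ ∧ (σ.act p.1.1 p.1.2, p.1.2) = p.2} :=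
    isClosed_graph_of_isCompact_preimage (hcont.prodMk continuousOn_snd) hproper
  convert hF.preimage (f := fun q : G × X × X => ((q.1, q.2.1), (q.2.2, q.2.1))) (by fun_prop)
    using 1
  ext ⟨t, x, y⟩
  simp

/-- If `F_σ : Γ_σ → X × X` is proper, then the graph
`Gr(σ) = {(t,x,y) : x ∈ X_{t⁻¹}, y = σ_t(x)}` is closed in `G × X × X`. -/
theorem graph_closed_of_proper {G X : Type*}
    [TopologicalSpace G] [Group G] [IsTopologicalGroup G] [LocallyCompactSpace G] [T2Space G]
    [TopologicalSpace X] [LocallyCompactSpace X] [T2Space X]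
    (σ : PartialAction G X)
    (hdom : ∀ t, IsOpen (σ.dom t))
    (hcont : ContinuousOn (fun p : G × X => σ.act p.1 p.2) {p : G × X | p.2 ∈ σ.dom p.1⁻¹})
    (hproper : ∀ K : Set (X × X), IsCompact K →
      IsCompact {p : G × X | p.2 ∈ σ.dom p.1⁻¹ ∧ (σ.act p.1 p.2, p.2) ∈ K}) :
    IsClosed {q : G × X × X | q.2.1 ∈ σ.dom q.1⁻¹ ∧ σ.act q.1 q.2.1 = q.2.2} :=
  graph_closed_of_proper_general σ hcont hproper
end

section
/- Let σ be a LCH partial action of G on X such that F_σ : Γ_σ → X × X is proper, and let σ^e be its enveloping action on X^e. Then X^e is Hausdorff and the action σ^e is proper. -/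
/-!
Properness of `(g, y) ↦ (g • y, y)` can be tested with ultrafilters one target point at a time.
At a point of `X × X` an ultrafilter converging under this map is trapped in the compact preimage
of a product of compact neighbourhoods inside `X`, so it has a limit there, and limits in the open
Hausdorff set `X` are unique. Every point of `Xe × Xe` is a `G × G`-translate of a point of
`X × X`, and translating is compatible with the map. Hausdorffness of `Xe` follows from properness
because the diagonal is the image of the closed set `{1} × Xe`.
-/

open Filter Topology

section OpenSubset

variable {Y : Type*} [TopologicalSpace Y] {U : Set Y}

lemma IsOpen.exists_compact_mem_nhds_subset (hU : IsOpen U) [LocallyCompactSpace U] {y : Y}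
    (hy : y ∈ U) : ∃ K ⊆ U, IsCompact K ∧ K ∈ 𝓝 y := by
  obtain ⟨K, hKc, hK⟩ := exists_compact_mem_nhds (⟨y, hy⟩ : U)
  exact ⟨(↑) '' K, Subtype.coe_image_subset U K, hKc.image continuous_subtype_val,
    hU.isOpenMap_subtype_val.image_mem_nhds hK⟩

lemma IsOpen.tendsto_nhds_unique (hU : IsOpen U) [T2Space U] {α : Type*} {f : α → Y}
    {l : Filter α} [l.NeBot] {a b : Y} (ha : a ∈ U) (hb : b ∈ U)
    (hfa : Tendsto f l (𝓝 a)) (hfb : Tendsto f l (𝓝 b)) : a = b := by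
  have : (comap ((↑) : U → Y) (map f l)).NeBot :=
    comap_coe_neBot_of_le_principal (hfa.mono_right (le_principal_iff.2 (hU.mem_nhds ha)))
  have h (c : Y) (hc : c ∈ U) (hfc : Tendsto f l (𝓝 c)) :
      comap ((↑) : U → Y) (map f l) ≤ 𝓝 ⟨c, hc⟩ := by
    rw [nhds_subtype]; exact comap_mono hfc
  exact congrArg Subtype.val <|
    _root_.tendsto_nhds_unique (tendsto_id'.2 (h a ha hfa)) (tendsto_id'.2 (h b hb hfb))

end OpenSubset

section ProperSMulAt

variable (G : Type*) {Y : Type*} [Group G] [MulAction G Y] [TopologicalSpace G] [TopologicalSpace Y]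

/-- The condition of `properSMul_iff_continuousSMul_ultrafilter_tendsto` at a single point. -/
def ProperSMulAt (y₁ y₂ : Y) : Prop :=
  ∀ 𝒰 : Ultrafilter (G × Y), Tendsto (fun gy : G × Y ↦ (gy.1 • gy.2, gy.2)) 𝒰 (𝓝 (y₁, y₂)) →
    ∃ g : G, g • y₂ = y₁ ∧ Tendsto Prod.fst (𝒰 : Filter (G × Y)) (𝓝 g)

variable {G}

lemma properSMul_of_forall_properSMulAt [ContinuousSMul G Y]
    (h : ∀ y₁ y₂ : Y, ProperSMulAt G y₁ y₂) : ProperSMul G Y :=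
  properSMul_iff_continuousSMul_ultrafilter_tendsto.2 ⟨‹_›, fun 𝒰 y₁ y₂ ↦ h y₁ y₂ 𝒰⟩

lemma ProperSMulAt.smul_smul [ContinuousMul G] [ContinuousConstSMul G Y] {y₁ y₂ : Y}
    (h : ProperSMulAt G y₁ y₂) (a b : G) : ProperSMulAt G (a • y₁) (b • y₂) := by
  intro 𝒰 h𝒰
  -- `φ` is chosen so that `(φ p).1 • (φ p).2 = a⁻¹ • p.1 • p.2` and `(φ p).2 = b⁻¹ • p.2`
  let φ : G × Y → G × Y := fun gy ↦ (a⁻¹ * gy.1 * b, b⁻¹ • gy.2)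
  have hφ : Tendsto (fun gy : G × Y ↦ (gy.1 • gy.2, gy.2)) (𝒰.map φ : Filter (G × Y))
      (𝓝 (y₁, y₂)) := by
    have hsmul : Continuous fun z : Y × Y ↦ (a⁻¹ • z.1, b⁻¹ • z.2) := by fun_prop
    have := (hsmul.tendsto _).comp h𝒰
    simp only [Function.comp_def, inv_smul_smul] at this
    rw [Ultrafilter.coe_map, tendsto_map'_iff]
    refine this.congr fun gy ↦ ?_
    simp [φ, mul_smul]
  obtain ⟨g, hg, hfst⟩ := h _ hφ
  refine ⟨a * g * b⁻¹, by simp [mul_smul, hg], ?_⟩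
  rw [Ultrafilter.coe_map, tendsto_map'_iff] at hfst
  have hmul : Continuous fun h : G ↦ a * h * b⁻¹ := by fun_prop
  have := (hmul.tendsto g).comp hfst
  simpa [φ, Function.comp_def, mul_assoc] using this

end ProperSMulAt

theorem properSMulAt_of_isCompact_preimage {G Y : Type*} [Group G] [MulAction G Y]
    [TopologicalSpace G] [TopologicalSpace Y] [ContinuousSMul G Y]
    {X : Set Y} (hX : IsOpen X) [T2Space X] [LocallyCompactSpace X]
    (hF : ∀ K : Set (Y × Y), K ⊆ X ×ˢ X → IsCompact K →
      IsCompact {p : G × Y | (p.2 ∈ X ∧ p.1 • p.2 ∈ X) ∧ (p.1 • p.2, p.2) ∈ K})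
    {y₁ y₂ : Y} (hy₁ : y₁ ∈ X) (hy₂ : y₂ ∈ X) : ProperSMulAt G y₁ y₂ := by
  intro 𝒰 h𝒰
  obtain ⟨K₁, hK₁X, hK₁, hK₁y⟩ := hX.exists_compact_mem_nhds_subset hy₁
  obtain ⟨K₂, hK₂X, hK₂, hK₂y⟩ := hX.exists_compact_mem_nhds_subset hy₂
  have hL := hF _ (Set.prod_mono hK₁X hK₂X) (hK₁.prod hK₂)
  obtain ⟨p, ⟨⟨hp₂, hp₁⟩, -⟩, hp⟩ := hL.ultrafilter_le_nhds 𝒰 <| le_principal_iff.2 <|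
    mem_of_superset (h𝒰 (prod_mem_nhds hK₁y hK₂y)) fun q hq ↦
      ⟨⟨hK₂X hq.2, hK₁X hq.1⟩, hq⟩
  have hcont : Continuous fun gy : G × Y ↦ (gy.1 • gy.2, gy.2) := by fun_prop
  have hlim := (hcont.tendsto p).mono_left hp
  have h₂ : p.2 = y₂ := hX.tendsto_nhds_unique hp₂ hy₂ hlim.snd_nhds h𝒰.snd_nhds
  have h₁ : p.1 • p.2 = y₁ := hX.tendsto_nhds_unique hp₁ hy₁ hlim.fst_nhds h𝒰.fst_nhds
  exact ⟨p.1, h₂ ▸ h₁, (continuous_fst.tendsto p).mono_left hp⟩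

theorem env_hausdorff_and_proper_of_proper_general {G Xe : Type*}
    [TopologicalSpace G] [Group G] [IsTopologicalGroup G] [T2Space G]
    [TopologicalSpace Xe] [MulAction G Xe] [ContinuousSMul G Xe]
    (X : Set Xe) (hX : IsOpen X) [T2Space X] [LocallyCompactSpace X]
    (hcover : ∀ z : Xe, ∃ t : G, ∃ x ∈ X, t • x = z)
    (hFproper : ∀ K : Set (Xe × Xe), K ⊆ X ×ˢ X → IsCompact K →
      IsCompact {p : G × Xe | (p.2 ∈ X ∧ p.1 • p.2 ∈ X) ∧ (p.1 • p.2, p.2) ∈ K}) :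
    T2Space Xe ∧ IsProperMap (fun p : G × Xe => (p.1 • p.2, p.2)) := by
  have : ProperSMul G Xe := properSMul_of_forall_properSMulAt fun z w ↦ by
    obtain ⟨a, x₁, hx₁, rfl⟩ := hcover z
    obtain ⟨b, x₂, hx₂, rfl⟩ := hcover w
    exact (properSMulAt_of_isCompact_preimage hX hFproper hx₁ hx₂).smul_smul a b
  exact ⟨t2Space_of_properSMul_of_t1Group (G := G), ProperSMul.isProperMap_smul_pair⟩

/-- Let `σ^e` be a continuous global action of a LCH group `G` on a space
`X^e`, and let `σ` be the partial action obtained by restricting it to an open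
subset `X` which is locally compact Hausdorff, with `X^e = ⋃_t σ^e_t(X)` (so
`σ^e` is the enveloping action of the LCH partial action `σ`).  If
`F_σ : Γ_σ → X × X`, `(t,x) ↦ (σ_t(x), x)`, is proper, then `X^e` is Hausdorff
and the enveloping action `σ^e` is proper. -/
theorem env_hausdorff_and_proper_of_proper {G Xe : Type*}
    [TopologicalSpace G] [Group G] [IsTopologicalGroup G] [LocallyCompactSpace G] [T2Space G]
    [TopologicalSpace Xe] [MulAction G Xe] [ContinuousSMul G Xe]
    (X : Set Xe) (hX : IsOpen X) [T2Space X] [LocallyCompactSpace X]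
    (hcover : ∀ z : Xe, ∃ t : G, ∃ x ∈ X, t • x = z)
    (hFproper : ∀ K : Set (Xe × Xe), K ⊆ X ×ˢ X → IsCompact K →
      IsCompact {p : G × Xe | (p.2 ∈ X ∧ p.1 • p.2 ∈ X) ∧ (p.1 • p.2, p.2) ∈ K}) :
    T2Space Xe ∧ IsProperMap (fun p : G × Xe => (p.1 • p.2, p.2)) :=
  env_hausdorff_and_proper_of_proper_general X hX hcover hFproper
end

section
/- A topological partial action τ of H on Y is free if and only if its enveloping action τ^e on Y^e is free. -/
section

variable {G α : Type*} [Group G] [MulAction G α]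

theorem smul_smul_eq_smul_iff_conj_smul_eq {t s : G} {x : α} :
    t • s • x = s • x ↔ (s⁻¹ * t * s) • x = x := by
  rw [mul_smul, mul_smul, inv_smul_eq_iff]

-- Stabilizers along an orbit are conjugate, so it suffices to test freeness on `Y`.
theorem eq_one_of_smul_eq_self_of_cover {Y : Set α} (hcover : ∀ z : α, ∃ s : G, ∃ y ∈ Y, s • y = z)
    (hfree : ∀ t : G, ∀ y ∈ Y, t • y = y → t = 1) {t : G} {z : α} (hfix : t • z = z) : t = 1 := by
  obtain ⟨s, y, hy, rfl⟩ := hcover z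
  have hconj : s⁻¹ * t * s = 1 := hfree _ y hy (smul_smul_eq_smul_iff_conj_smul_eq.mp hfix)
  rwa [mul_assoc, inv_mul_eq_one, right_eq_mul] at hconj

end

theorem free_iff_env_free_general {H Ye : Type*} [Group H] [MulAction H Ye]
    (Y : Set Ye)
    (hcover : ∀ z : Ye, ∃ t : H, ∃ y ∈ Y, t • y = z) :
    (∀ t : H, t ≠ 1 → ∀ y ∈ Y, t • y ∈ Y → t • y ≠ y) ↔
    (∀ (t : H) (y : Ye), t • y = y → t = 1) := by
  constructor
  · intro hfree t z hfix
    refine eq_one_of_smul_eq_self_of_cover hcover (fun s y hy hsy => ?_) hfix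
    by_contra hs
    exact hfree s hs y hy (by rwa [hsy]) hsy
  · exact fun hfree t ht y _ _ hfix => ht (hfree t y hfix)

/-- Let `τ^e` be a global continuous action of `H` on `Y^e` and `Y ⊆ Y^e` open
with `Y^e = ⋃_t τ^e_t(Y)`, so that the restriction `τ` to `Y` (with domains
`Y_t = Y ∩ τ^e_t(Y)`) is a topological partial action with enveloping action
`τ^e`.  Then `τ` is free (no nontrivial `t` fixes a point of its domain) if and
only if the enveloping action `τ^e` is free. -/
theorem free_iff_env_free {H Ye : Type*} [Group H] [TopologicalSpace Ye] [MulAction H Ye]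
    (Y : Set Ye) (hY : IsOpen Y)
    (hc : ∀ t : H, Continuous fun y : Ye => t • y)
    (hcover : ∀ z : Ye, ∃ t : H, ∃ y ∈ Y, t • y = z) :
    (∀ t : H, t ≠ 1 → ∀ y ∈ Y, t • y ∈ Y → t • y ≠ y) ↔
    (∀ (t : H) (y : Ye), t • y = y → t = 1) :=
  free_iff_env_free_general Y hcover
end

section
/- Let (a,b) ↦ a·b be a non-degenerate action by adjointable maps of the Fell bundle 𝒜 on the Fell bundle ℬ over G, where non-degenerate means the closed span of (A_t A_{t⁻¹})·B_e equals the closed span of B_t B_{t⁻¹} for all t. Then for all t ∈ G the closed spans satisfy A_t · B_e = A_e · B_t = B_t. -/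
/-- A Fell bundle over a group `G`, encoded as a `G`-grading of a (non-unital)
C*-algebra `A` by closed subspaces: `fiber s * fiber t ⊆ fiber (s*t)` and
`(fiber t)* = fiber t⁻¹`.  The C*-axioms `‖b* b‖ = ‖b‖²` and positivity of
`b* b` hold in the ambient C*-algebra. -/
structure FellBundle (G : Type*) [Group G] (A : Type*) [NonUnitalCStarAlgebra A] where
  fiber : G → Submodule ℂ A
  isClosed_fiber : ∀ t, IsClosed (fiber t : Set A)
  mul_mem : ∀ {s t : G} {a b : A}, a ∈ fiber s → b ∈ fiber t → a * b ∈ fiber (s * t)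
  star_mem : ∀ {t : G} {a : A}, a ∈ fiber t → star a ∈ fiber t⁻¹

variable {G : Type*} [Group G] {A B : Type*} [NonUnitalCStarAlgebra A] [NonUnitalCStarAlgebra B]

/-- An action of a Fell bundle `𝒜` on a Fell bundle `ℬ` by adjointable maps:
`a·b ∈ B_{st}` for `a ∈ A_s`, `b ∈ B_t`; linearity in the first variable;
`a·(c·b) = (ac)·b`; and `(a·b)* d = b* (a*·d)`. -/
structure AdjAction (FA : FellBundle G A) (FB : FellBundle G B) where
  act : A → B → B
  act_mem : ∀ {s t : G} {a : A} {b : B},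
    a ∈ FA.fiber s → b ∈ FB.fiber t → act a b ∈ FB.fiber (s * t)
  add_act : ∀ {s t : G} {a a' : A} {b : B},
    a ∈ FA.fiber s → a' ∈ FA.fiber s → b ∈ FB.fiber t →
    act (a + a') b = act a b + act a' b
  smul_act : ∀ {s t : G} (c : ℂ) {a : A} {b : B},
    a ∈ FA.fiber s → b ∈ FB.fiber t → act (c • a) b = c • act a b
  assoc : ∀ {s u t : G} {a c : A} {b : B},
    a ∈ FA.fiber s → c ∈ FA.fiber u → b ∈ FB.fiber t → act a (act c b) = act (a * c) b
  adjoint : ∀ {s t u : G} {a : A} {b d : B},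
    a ∈ FA.fiber s → b ∈ FB.fiber t → d ∈ FB.fiber u →
    star (act a b) * d = star b * act (star a) d

/-- Closed linear span of a subset of a normed `ℂ`-module. -/
def cspan {B : Type*} [NonUnitalCStarAlgebra B] (S : Set B) : Set B :=
  closure ((Submodule.span ℂ S : Submodule ℂ B) : Set B)

/-- Non-degeneracy of an action by adjointable maps:
`cspan ((A_t A_{t⁻¹}) · B_e) = cspan (B_t B_{t⁻¹})` for every `t`. -/
def AdjAction.Nondeg {FA : FellBundle G A} {FB : FellBundle G B} (E : AdjAction FA FB) : Prop :=
  ∀ t : G,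
    cspan {x : B | ∃ a ∈ FA.fiber t, ∃ a' ∈ FA.fiber t⁻¹, ∃ b ∈ FB.fiber (1 : G),
        x = E.act (a * a') b}
      = cspan {x : B | ∃ b ∈ FB.fiber t, ∃ b' ∈ FB.fiber t⁻¹, x = b * b'}

/-!
Every element of `B_t` is a limit of sums of triples `b₁ b₂* b₃` with `bᵢ ∈ B_t`. By
non-degeneracy `b₁ b₂*` is a limit of sums of `(a a')·c` with `a ∈ A_t`, `a' ∈ A_{t⁻¹}`,
`c ∈ B_e`, and adjointability makes the action a right module map, `x·(c b) = (x·c) b`. Hence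
`((a a')·c) b₃ = a·(a'·(c b₃)) ∈ A_t · B_e` and `((a a')·c) b₃ = (a a')·(c b₃) ∈ A_e · B_t`.
-/

section ClosedSpan

variable {B : Type*} [NonUnitalCStarAlgebra B]

lemma subset_cspan (S : Set B) : S ⊆ cspan S :=
  fun _ hx => subset_closure (Submodule.subset_span hx)

lemma cspan_subset_of_isClosed {S : Set B} {M : Submodule ℂ B} (hM : IsClosed (M : Set B))
    (h : S ⊆ M) : cspan S ⊆ M :=
  closure_minimal (Submodule.span_le.2 h) hM

lemma cspan_subset_cspan {S T : Set B} (h : S ⊆ cspan T) : cspan S ⊆ cspan T := by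
  rw [cspan, ← Submodule.topologicalClosure_coe] at h ⊢
  exact cspan_subset_of_isClosed (Submodule.isClosed_topologicalClosure _) h

lemma image_cspan_subset {f : B →ₗ[ℂ] B} (hf : Continuous f) (S : Set B) :
    f '' cspan S ⊆ cspan (f '' S) := by
  rw [cspan, cspan, ← Submodule.map_span, Submodule.map_coe]
  exact image_closure_subset_closure_image hf

end ClosedSpan

lemma FellBundle.mem_fiber_of_eq (F : FellBundle G B) {u v : G} (h : u = v) {x : B}
    (hx : x ∈ F.fiber u) : x ∈ F.fiber v :=
  h ▸ hx

lemma FellBundle.fiber_subset_cspan (F : FellBundle G B) {t : G}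
    (hF : cspan {x : B | ∃ b ∈ F.fiber t, ∃ b' ∈ F.fiber t, ∃ b'' ∈ F.fiber t,
      x = b * star b' * b''} = (F.fiber t : Set B)) {S : Set B}
    (hS : ∀ {b₁ b₂ b₃ : B}, b₁ ∈ F.fiber t → b₂ ∈ F.fiber t → b₃ ∈ F.fiber t →
      b₁ * star b₂ * b₃ ∈ cspan S) :
    (F.fiber t : Set B) ⊆ cspan S := by
  rw [← hF]
  refine cspan_subset_cspan ?_
  rintro _ ⟨b₁, hb₁, b₂, hb₂, b₃, hb₃, rfl⟩
  exact hS hb₁ hb₂ hb₃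

namespace AdjAction

variable {FA : FellBundle G A} {FB : FellBundle G B} (E : AdjAction FA FB)

/-- `A_s · B_t` in the paper's notation. -/
def actSet (s t : G) : Set B :=
  {x | ∃ a ∈ FA.fiber s, ∃ b ∈ FB.fiber t, x = E.act a b}

lemma cspan_actSet_subset_fiber {s u t : G} (h : s * u = t) :
    cspan (E.actSet s u) ⊆ FB.fiber t :=
  cspan_subset_of_isClosed (FB.isClosed_fiber t) <| by
    rintro _ ⟨a, ha, b, hb, rfl⟩
    exact FB.mem_fiber_of_eq h (E.act_mem ha hb)

lemma act_mul {s u v : G} {x : A} {c b : B} (hx : x ∈ FA.fiber s) (hc : c ∈ FB.fiber u)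
    (hb : b ∈ FB.fiber v) : E.act x (c * b) = E.act x c * b := by
  set δ := E.act x (c * b) - E.act x c * b
  have hδ : δ ∈ FB.fiber (s * (u * v)) :=
    sub_mem (E.act_mem hx (FB.mul_mem hc hb))
      (FB.mem_fiber_of_eq (by group) (FB.mul_mem (E.act_mem hx hc) hb))
  have adj {w : G} {y : B} (hy : y ∈ FB.fiber w) :
      star δ * E.act x y = star (E.act (star x) δ) * y := by
    simpa using (E.adjoint (FA.star_mem hx) hδ hy).symm
  have : star δ * δ = 0 := by
    rw [mul_sub, ← mul_assoc, adj (FB.mul_mem hc hb), adj hc, mul_assoc, sub_self]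
  exact sub_eq_zero.mp ((CStarRing.star_mul_self_eq_zero_iff δ).mp this)

variable {t : G} {a a' : A} {c b : B}

lemma act_mul_mul_mem_actSet_left (ha : a ∈ FA.fiber t) (ha' : a' ∈ FA.fiber t⁻¹)
    (hc : c ∈ FB.fiber 1) (hb : b ∈ FB.fiber t) : E.act (a * a') c * b ∈ E.actSet t 1 := by
  have hcb : c * b ∈ FB.fiber (1 * t) := FB.mul_mem hc hb
  refine ⟨a, ha, E.act a' (c * b), FB.mem_fiber_of_eq (by group) (E.act_mem ha' hcb), ?_⟩
  rw [E.assoc ha ha' hcb, E.act_mul (FA.mul_mem ha ha') hc hb]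

lemma act_mul_mul_mem_actSet_right (ha : a ∈ FA.fiber t) (ha' : a' ∈ FA.fiber t⁻¹)
    (hc : c ∈ FB.fiber 1) (hb : b ∈ FB.fiber t) : E.act (a * a') c * b ∈ E.actSet 1 t :=
  ⟨a * a', FA.mem_fiber_of_eq (mul_inv_cancel t) (FA.mul_mem ha ha'), c * b,
    FB.mem_fiber_of_eq (one_mul t) (FB.mul_mem hc hb), (E.act_mul (FA.mul_mem ha ha') hc hb).symm⟩

lemma mul_star_mul_mem_cspan_actSet (hE : E.Nondeg) {b₁ b₂ b₃ : B} (hb₁ : b₁ ∈ FB.fiber t)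
    (hb₂ : b₂ ∈ FB.fiber t) (hb₃ : b₃ ∈ FB.fiber t) :
    b₁ * star b₂ * b₃ ∈ cspan (E.actSet t 1) ∧ b₁ * star b₂ * b₃ ∈ cspan (E.actSet 1 t) := by
  have h₁₂ : b₁ * star b₂ ∈ cspan {x : B | ∃ a ∈ FA.fiber t, ∃ a' ∈ FA.fiber t⁻¹,
      ∃ c ∈ FB.fiber (1 : G), x = E.act (a * a') c} := by
    rw [hE t]
    exact subset_cspan _ ⟨b₁, hb₁, star b₂, FB.star_mem hb₂, rfl⟩
  have h := image_cspan_subset (f := LinearMap.mulRight ℂ b₃) (continuous_mul_const b₃) _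
    ⟨_, h₁₂, rfl⟩
  constructor <;> refine cspan_subset_cspan ?_ h <;>
    rintro _ ⟨_, ⟨a, ha, a', ha', c, hc, rfl⟩, rfl⟩
  · exact subset_cspan _ (E.act_mul_mul_mem_actSet_left ha ha' hc hb₃)
  · exact subset_cspan _ (E.act_mul_mul_mem_actSet_right ha ha' hc hb₃)

end AdjAction

/-- For a non-degenerate action of `𝒜` on `ℬ` by adjointable maps, one has
`A_t · B_e = A_e · B_t = B_t` (closed linear spans), using the Fell bundle
identity `B_t = cspan (B_t B_t* B_t)`. -/
theorem adjAction_nondegenerate_spans {FA : FellBundle G A} {FB : FellBundle G B}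
    (E : AdjAction FA FB) (hE : E.Nondeg)
    (hFell : ∀ t : G, cspan {x : B | ∃ b ∈ FB.fiber t, ∃ b' ∈ FB.fiber t,
        ∃ b'' ∈ FB.fiber t, x = b * star b' * b''} = (FB.fiber t : Set B)) :
    ∀ t : G,
      cspan {x : B | ∃ a ∈ FA.fiber t, ∃ b ∈ FB.fiber (1 : G), x = E.act a b}
        = (FB.fiber t : Set B) ∧
      cspan {x : B | ∃ a ∈ FA.fiber (1 : G), ∃ b ∈ FB.fiber t, x = E.act a b}
        = (FB.fiber t : Set B) := by
  refine fun t => ⟨(E.cspan_actSet_subset_fiber (mul_one t)).antisymm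
      (FB.fiber_subset_cspan (hFell t) fun hb₁ hb₂ hb₃ => ?_),
    (E.cspan_actSet_subset_fiber (one_mul t)).antisymm
      (FB.fiber_subset_cspan (hFell t) fun hb₁ hb₂ hb₃ => ?_)⟩
  exacts [(E.mul_star_mul_mem_cspan_actSet hE hb₁ hb₂ hb₃).1,
    (E.mul_star_mul_mem_cspan_actSet hE hb₁ hb₂ hb₃).2]
end
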